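/- arXiv:1110.4136 — 2 statements merged into one kernel-verified Lean document; each statement's English description precedes it below -/
import Mathlib

section
/- If a binary word w contains at least one 1 and is even, then w = 0^s 1 (0^{s+t} 1)^k 0^t for some natural numbers s, t, k ≥ 0. -/
/-! A word is determined by its gap sequence `[s₀, …, sₖ]`: it is `0^{s₀} 1 0^{s₁} 1 ⋯ 1 0^{sₖ}`.
If the word is even and contains a 1, the cyclic gap sequence `(s₀ + sₖ, s₁, …, sₖ₋₁)` is constant,
so the gap sequence is `s :: (s + t)^m ++ [t]` with `s = s₀`, `t = sₖ`; reading the word back from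
it gives `0^s 1 (0^{s+t} 1)^m 0^t`. -/

/-- k-fold concatenation of a word -/
def pw (u : List Bool) (k : ℕ) : List Bool := (List.replicate k u).flatten

/-- a block of `s` zeros -/
def zeros (s : ℕ) : List Bool := List.replicate s false

/-- `w` is an abelian square: `w = s ++ t` with `t` a permutation of `s`
(equivalently over a binary alphabet: equal length and equal number of 1's). -/
def IsAbelianSquare (w : List Bool) : Prop :=
  ∃ s t : List Bool, w = s ++ t ∧ s.length = t.length ∧ s.count true = t.count true

def w4 : List Bool := [true, false, false, false]
def w3 : List Bool := [true, false, false]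
def w2 : List Bool := [true, false]

/-- the word z = (1000)^n (100) (10)^(n!+n) (100) (100)^(2(n!+n)) -/
def Z (n : ℕ) : List Bool :=
  pw w4 n ++ w3 ++ pw w2 (n.factorial + n) ++ w3 ++ pw w3 (2 * (n.factorial + n))

/-- membership in the regular language R = (1000)^* (100) (10)^* (100) (100)^* -/
def InR (w : List Bool) : Prop :=
  ∃ a b c : ℕ, w = pw w4 a ++ w3 ++ pw w2 b ++ w3 ++ pw w3 c

/-- the gap sequence `[s_0, s_1, ..., s_k]` of `w = 0^{s_0} 1 0^{s_1} 1 ⋯ 1 0^{s_k}` -/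
def gaps (w : List Bool) : List ℕ := (w.splitOn true).map List.length

/-- `alt w` = number of indices `1 ≤ i < k` with `s_i ≠ s_{i+1}` -/
def alt (w : List Bool) : ℕ :=
  ((gaps w).tail.zip (gaps w).tail.tail).countP (fun p => decide (p.1 ≠ p.2))

/-- writing `w = 0^{s_1} 1 0^{s_2} 1 ⋯ 0^{s_k} 1 0^{s_{k+1}}` (with k ones),
the cyclic sequence `(s_1 + s_{k+1}, s_2, …, s_k)` -/
def cyclicGaps (w : List Bool) : List ℕ :=
  ((gaps w).headI + (gaps w).getLast!) :: (gaps w).tail.dropLast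

/-- `w` (containing a 1) is uneven: the cyclic gap sequence has length > 1 and
two cyclically adjacent unequal entries (equivalently it is not constant) -/
def Uneven (w : List Bool) : Prop :=
  2 ≤ w.count true ∧ ¬ (cyclicGaps w).Chain' (· = ·)

/-- `w` (containing a 1) is even if it is not uneven -/
def EvenWord (w : List Bool) : Prop := true ∈ w ∧ ¬ Uneven w

def ofGaps (L : List ℕ) : List Bool := [true].intercalate (L.map zeros)

lemma ofGaps_succ_cons (a : ℕ) (L : List ℕ) : ofGaps ((a + 1) :: L) = false :: ofGaps (a :: L) := by
  cases L <;> simp [ofGaps, zeros, List.replicate_succ, List.intercalate_cons_cons]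

lemma ofGaps_zero_cons {L : List ℕ} (hL : L ≠ []) : ofGaps (0 :: L) = true :: ofGaps L := by
  simp [ofGaps, zeros, List.intercalate_cons_of_ne_nil, hL]

lemma exists_ofGaps_eq (w : List Bool) :
    ∃ L : List ℕ, L.length = w.count true + 1 ∧ ofGaps L = w := by
  induction w with
  | nil => exact ⟨[0], rfl, rfl⟩
  | cons x w ih =>
    obtain ⟨L, hlen, rfl⟩ := ih
    cases x
    · obtain ⟨a, L, rfl⟩ := List.exists_cons_of_length_eq_add_one hlen
      exact ⟨(a + 1) :: L, by simpa using hlen, ofGaps_succ_cons a L⟩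
    · have hL : L ≠ [] := List.ne_nil_of_length_eq_add_one hlen
      exact ⟨0 :: L, by simp [hlen], ofGaps_zero_cons hL⟩

lemma gaps_ofGaps {L : List ℕ} (hL : L ≠ []) : gaps (ofGaps L) = L := by
  rw [gaps, ofGaps, List.splitOn_intercalate _ (by simp [zeros]) (by simpa using hL)]
  simp [zeros, Function.comp_def]

lemma List.exists_eq_cons_append_singleton {α : Type*} {L : List α} (h : 2 ≤ L.length) :
    ∃ a M b, L = a :: M ++ [b] := by
  obtain ⟨a, L, rfl⟩ := List.exists_cons_of_length_pos (by omega : 0 < L.length)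
  have hL : L ≠ [] := List.ne_nil_of_length_pos (by simp at h; omega)
  exact ⟨a, L.dropLast, L.getLast hL, by rw [List.cons_append, List.dropLast_append_getLast]⟩

lemma intercalate_replicate_append (c d : List Bool) (k : ℕ) :
    [true].intercalate (List.replicate k c ++ [d]) = pw (c ++ [true]) k ++ d := by
  induction k with
  | zero => simp [pw]
  | succ k ih =>
    rw [List.replicate_succ, List.cons_append, List.intercalate_cons_of_ne_nil (by simp), ih]
    simp [pw, List.replicate_succ]

lemma ofGaps_cons_replicate_append (a b k : ℕ) :
    ofGaps (a :: List.replicate k (a + b) ++ [b]) =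
      zeros a ++ [true] ++ pw (zeros (a + b) ++ [true]) k ++ zeros b := by
  rw [ofGaps, List.cons_append, List.map_cons, List.intercalate_cons_of_ne_nil (by simp)]
  simp [List.map_replicate, intercalate_replicate_append]

lemma cyclicGaps_of_gaps_eq {w : List Bool} {a b : ℕ} {M : List ℕ} (h : gaps w = a :: M ++ [b]) :
    cyclicGaps w = (a + b) :: M := by
  simp [cyclicGaps, h, List.getLast!_eq_getLast?_getD, List.getLast?_cons]

lemma eq_replicate_of_not_uneven {w : List Bool} {a b : ℕ} {M : List ℕ}
    (hw : ¬ Uneven w) (h : gaps w = a :: M ++ [b]) (hcount : w.count true = M.length + 1) :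
    M = List.replicate M.length (a + b) := by
  rw [Uneven, not_and_or, not_not, cyclicGaps_of_gaps_eq h] at hw
  rcases hw with hlt | hM
  · rw [List.eq_nil_of_length_eq_zero (by omega : M.length = 0)]
    rfl
  · exact List.isChain_cons_eq_iff_eq_replicate.1 hM

theorem stmt5 (w : List Bool) (h1 : true ∈ w) (he : EvenWord w) :
    ∃ s t k : ℕ, w = zeros s ++ [true] ++ pw (zeros (s + t) ++ [true]) k ++ zeros t := by
  obtain ⟨L, hlen, rfl⟩ := exists_ofGaps_eq w
  have hcount : 1 ≤ (ofGaps L).count true := List.count_pos_iff.2 h1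
  obtain ⟨a, M, b, rfl⟩ := List.exists_eq_cons_append_singleton (by omega : 2 ≤ L.length)
  have hgaps := gaps_ofGaps (L := a :: M ++ [b]) (by simp)
  simp only [List.length_append, List.length_cons, List.length_nil] at hlen
  have hM := eq_replicate_of_not_uneven he.2 hgaps (by omega)
  refine ⟨a, b, M.length, ?_⟩
  rw [← ofGaps_cons_replicate_append, ← hM]
end

section
/- For every n > 4, every p with 0 ≤ p < n, and every l ≥ 1 such that 2(1+p) divides l·n!, the word (1000)^{n!+n}(100)(10)^{n!+n+l·n!/(1+p)}(100)(100)^{2(n!+n)} is an abelian square. -/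
lemma pw_add (u : List Bool) (a b : ℕ) : pw u (a+b) = pw u a ++ pw u b := by
  rw [pw, List.replicate_add, List.flatten_append]; rfl

lemma pw_succ (u : List Bool) (k : ℕ) : pw u (k+1) = u ++ pw u k := by
  rw [pw, List.replicate_succ, List.flatten_cons]; rfl

lemma pw_length (u : List Bool) (k : ℕ) : (pw u k).length = k * u.length := by
  induction k with
  | zero => simp [pw]
  | succ k ih => rw [pw_succ, List.length_append, ih]; ring

lemma pw_count (u : List Bool) (k : ℕ) : (pw u k).count true = k * u.count true := by
  induction k with
  | zero => simp [pw]
  | succ k ih => rw [pw_succ, List.count_append, ih]; ring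

theorem stmt14 (n p l : ℕ) (hn : 4 < n) (hp : p < n) (hl : 1 ≤ l)
    (hdvd : 2 * (1 + p) ∣ l * n.factorial) :
    IsAbelianSquare (pw w4 (n.factorial + n) ++ w3 ++
      pw w2 (n.factorial + n + l * n.factorial / (1 + p)) ++ w3 ++
      pw w3 (2 * (n.factorial + n))) := by
  set N := n.factorial + n
  set q := l * n.factorial / (2 * (1 + p)) with hq
  have h2q : l * n.factorial / (1 + p) = 2 * q := by
    obtain ⟨c, hc⟩ := hdvd
    rw [hc, hq, hc]
    rw [Nat.mul_div_cancel_left c (by omega : 0 < 2 * (1+p))]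
    rw [show 2 * (1 + p) * c = (1 + p) * (2 * c) by ring,
      Nat.mul_div_cancel_left _ (by omega : 0 < 1 + p)]
  refine ⟨pw w4 N ++ w3 ++ pw w2 N ++ pw w2 q, pw w2 q ++ w3 ++ pw w3 (2 * N), ?_, ?_, ?_⟩
  · have key : pw w2 (N + 2 * q) = pw w2 N ++ pw w2 q ++ pw w2 q := by
      rw [show N + 2 * q = (N + q) + q by ring, pw_add, pw_add]
    rw [h2q, key]
    simp
  · simp [pw_length, w2, w3, w4]; ring
  · simp [pw_count, List.count_append, w2, w3, w4]; omega
end
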